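/- Let g : ℝ → ℝ be analytic at v = f(x) and f : ℝ → ℝ analytic at x, and fix q ∈ ℕ. Then the function h(x') = g^{(q)}(f(x')), where g^{(q)} denotes the q-th derivative of g, is analytic at x; its 0-th Taylor coefficient at x equals g^{(q)}(v), and for every n ≥ 1 its n-th Taylor coefficient h^{(n)}(x)/n! equals the coefficient of X^n in the formal substitution Q(R(X)), where Q = Σ_{i≥1} (g^{(q+i)}(v)/i!) X^i and R = Σ_{i≥1} (f^{(i)}(x)/i!) X^i. -/

import Mathlib

open scoped Nat

/-- Coefficient of `X^n` in the formal substitution `Q(R(X))`, where `R` is assumed to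
have zero constant term (so only powers `R^i` with `i ≤ n` contribute to coefficient `n`). -/
noncomputable def substCoeff (Q R : PowerSeries ℝ) (n : ℕ) : ℝ :=
  PowerSeries.coeff n (∑ i ∈ Finset.range (n + 1), PowerSeries.coeff i Q • R ^ i)


lemma aux_analyticAt_deriv {f : ℝ → ℝ} {y : ℝ} (h : AnalyticAt ℝ f y) :
    AnalyticAt ℝ (deriv f) y := by
  have h1 : AnalyticAt ℝ (fun z => (ContinuousLinearMap.apply ℝ ℝ (1:ℝ)) (fderiv ℝ f z)) y :=
    ((ContinuousLinearMap.apply ℝ ℝ (1:ℝ)).analyticAt _).comp h.fderiv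
  have h2 : deriv f = fun z => (ContinuousLinearMap.apply ℝ ℝ (1:ℝ)) (fderiv ℝ f z) := by
    funext z; simp [ContinuousLinearMap.apply, fderiv_apply_one_eq_deriv]
  rw [h2]; exact h1

lemma aux_analyticAt_iteratedDeriv {g : ℝ → ℝ} {y : ℝ} (h : AnalyticAt ℝ g y) (q : ℕ) :
    AnalyticAt ℝ (iteratedDeriv q g) y := by
  induction q generalizing g with
  | zero => simpa [iteratedDeriv_zero]
  | succ q ih => rw [iteratedDeriv_succ']; exact ih (aux_analyticAt_deriv h)

lemma aux_iteratedDeriv_iteratedDeriv (g : ℝ → ℝ) (q i : ℕ) :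
    iteratedDeriv i (iteratedDeriv q g) = iteratedDeriv (q + i) g := by
  rw [iteratedDeriv_eq_iterate, iteratedDeriv_eq_iterate, iteratedDeriv_eq_iterate,
    ← Function.iterate_add_apply, Nat.add_comm]

lemma aux_coeff_eq {f : ℝ → ℝ} {p : FormalMultilinearSeries ℝ ℝ ℝ} {x : ℝ}
    (h : HasFPowerSeriesAt f p x) (n : ℕ) :
    p.coeff n = iteratedDeriv n f x / (n ! : ℝ) := by
  obtain ⟨r, hr⟩ := h
  have h1 := hr.factorial_smul (y := (1:ℝ)) n
  rw [iteratedDeriv_eq_iteratedFDeriv]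
  have h2 : p n (fun _ ↦ (1:ℝ)) = p.coeff n := rfl
  rw [h2, nsmul_eq_mul] at h1
  rw [← h1]
  field_simp

lemma aux_coeff_comp (qs ps : FormalMultilinearSeries ℝ ℝ ℝ) (n : ℕ) :
    (qs.comp ps).coeff n =
      ∑ c : Composition n, qs.coeff c.length * ∏ j, ps.coeff (c.blocksFun j) := by
  show (qs.comp ps) n 1 = _
  rw [FormalMultilinearSeries.comp, ContinuousMultilinearMap.sum_apply]
  refine Finset.sum_congr rfl fun c _ => ?_
  rw [FormalMultilinearSeries.compAlongComposition_apply,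
    FormalMultilinearSeries.apply_eq_prod_smul_coeff, smul_eq_mul, mul_comm]
  congr 1

def auxComp (n : ℕ) (a : Σ _ : ℕ, ℕ →₀ ℕ) (hsum : ∑ j ∈ Finset.range a.1, a.2 j = n)
    (hpos : ∀ j ∈ Finset.range a.1, a.2 j ≠ 0) : Composition n where
  blocks := List.ofFn fun j : Fin a.1 => a.2 j
  blocks_pos := by
    intro b hb
    rw [List.mem_ofFn] at hb
    obtain ⟨j, rfl⟩ := hb
    exact Nat.pos_of_ne_zero (hpos j (Finset.mem_range.2 j.2))
  blocks_sum := by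
    rw [List.sum_ofFn, Fin.sum_univ_eq_sum_range]
    exact hsum

lemma aux_substCoeff_eq (Q R : PowerSeries ℝ) (hR0 : PowerSeries.coeff 0 R = 0) (n : ℕ) :
    substCoeff Q R n =
      ∑ c : Composition n,
        PowerSeries.coeff c.length Q * ∏ j, PowerSeries.coeff (c.blocksFun j) R := by
  classical
  unfold substCoeff
  rw [map_sum]
  have step1 : ∀ i ∈ Finset.range (n+1),
      PowerSeries.coeff n (PowerSeries.coeff i Q • R ^ i) =
      ∑ l ∈ Finset.finsuppAntidiag (Finset.range i) n,
        PowerSeries.coeff i Q * ∏ j ∈ Finset.range i, PowerSeries.coeff (l j) R := by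
    intro i _
    rw [LinearMap.map_smul, smul_eq_mul, PowerSeries.coeff_pow, Finset.mul_sum]
  rw [Finset.sum_congr rfl step1, Finset.sum_sigma']
  set S := (Finset.range (n+1)).sigma (fun i => Finset.finsuppAntidiag (Finset.range i) n) with hS
  set F : (Σ _ : ℕ, ℕ →₀ ℕ) → ℝ := fun a =>
    PowerSeries.coeff a.1 Q * ∏ j ∈ Finset.range a.1, PowerSeries.coeff (a.2 j) R with hF
  show ∑ a ∈ S, F a = _
  have hjunk : ∀ a ∈ S, F a ≠ 0 → (∀ j ∈ Finset.range a.1, a.2 j ≠ 0) := by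
    intro a _ hne j hj hz
    apply hne
    have : ∏ k ∈ Finset.range a.1, PowerSeries.coeff (a.2 k) R = 0 :=
      Finset.prod_eq_zero hj (by rw [hz, hR0])
    simp [hF, this]
  rw [← Finset.sum_filter_of_ne hjunk]
  have hmem : ∀ a (ha : a ∈ S.filter (fun a => ∀ j ∈ Finset.range a.1, a.2 j ≠ 0)),
      (∑ j ∈ Finset.range a.1, a.2 j = n) ∧ (a.2.support ⊆ Finset.range a.1) ∧
      (∀ j ∈ Finset.range a.1, a.2 j ≠ 0) ∧ a.1 ∈ Finset.range (n+1) := by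
    intro a ha
    obtain ⟨h1, h2⟩ := Finset.mem_filter.1 ha
    obtain ⟨h3, h4⟩ := Finset.mem_sigma.1 h1
    obtain ⟨h5, h6⟩ := Finset.mem_finsuppAntidiag.1 h4
    exact ⟨h5, h6, h2, h3⟩
  refine Finset.sum_bij' (i := fun a ha => auxComp n a (hmem a ha).1 (hmem a ha).2.2.1)
    (j := fun c _ => ⟨c.length, c.blocks.toFinsupp⟩) ?_ ?_ ?_ ?_ ?_
  · intro a ha
    exact Finset.mem_univ _
  · intro c _
    refine Finset.mem_filter.2 ⟨Finset.mem_sigma.2 ⟨?_, ?_⟩, ?_⟩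
    · exact Finset.mem_range.2 (Nat.lt_succ_of_le c.length_le)
    · refine Finset.mem_finsuppAntidiag.2 ⟨?_, ?_⟩
      · calc ∑ j ∈ Finset.range c.length, c.blocks.toFinsupp j
            = ∑ j : Fin c.length, c.blocks.toFinsupp j := (Fin.sum_univ_eq_sum_range _ _).symm
          _ = ∑ j : Fin c.blocks.length, c.blocks.get j := by
              refine Finset.sum_congr rfl fun j _ => ?_
              simp [List.toFinsupp_apply_fin]
          _ = c.blocks.sum := by rw [← List.sum_ofFn, List.ofFn_get]
          _ = n := c.blocks_sum
      · intro j hj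
        rw [Finsupp.mem_support_iff, List.toFinsupp_apply] at hj
        rw [Finset.mem_range]
        by_contra hge
        push_neg at hge
        exact hj (List.getD_eq_default _ _ hge)
    · intro j hj
      rw [List.toFinsupp_apply, List.getD_eq_getElem _ _ (by simpa using Finset.mem_range.1 hj)]
      exact (c.blocks_pos (List.getElem_mem _)).ne'
  · intro a ha
    obtain ⟨i, l⟩ := a
    obtain ⟨hsum', hsupp', hpos', _⟩ := hmem ⟨i, l⟩ ha
    refine Sigma.ext ?_ ?_
    · simp [auxComp, Composition.length]
    · rw [heq_iff_eq]
      show (List.ofFn fun j : Fin (⟨i, l⟩ : Σ _ : ℕ, ℕ →₀ ℕ).1 =>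
        (⟨i, l⟩ : Σ _ : ℕ, ℕ →₀ ℕ).2 j).toFinsupp = l
      ext k
      rw [List.toFinsupp_apply]
      by_cases hk : k < i
      · rw [List.getD_eq_getElem _ _ (by simpa using hk)]
        simp [List.getElem_ofFn]
      · rw [List.getD_eq_default _ _ (by simpa using hk)]
        symm
        rw [← Finsupp.notMem_support_iff]
        intro hs
        exact hk (Finset.mem_range.1 (hsupp' hs))
  · intro c _
    apply Composition.ext
    simp only [auxComp]
    refine List.ext_getElem (by simp [Composition.length]) ?_
    intro k h1 h2
    rw [List.getElem_ofFn]
    rw [List.toFinsupp_apply, List.getD_eq_getElem _ _ (by simpa [Composition.length] using h2)]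
  · intro a ha
    obtain ⟨i, l⟩ := a
    obtain ⟨hsum', hsupp', hpos', _⟩ := hmem ⟨i, l⟩ ha
    show PowerSeries.coeff i Q * ∏ j ∈ Finset.range i, PowerSeries.coeff (l j) R =
      PowerSeries.coeff (auxComp n ⟨i, l⟩ hsum' hpos').length Q *
        ∏ j, PowerSeries.coeff ((auxComp n ⟨i, l⟩ hsum' hpos').blocksFun j) R
    have hlen : (auxComp n ⟨i, l⟩ hsum' hpos').length = i := by
      simp [auxComp, Composition.length]
    have hb : ∀ j : Fin (auxComp n ⟨i, l⟩ hsum' hpos').length,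
        (auxComp n ⟨i, l⟩ hsum' hpos').blocksFun j = l j.val := by
      intro j
      simp [auxComp, Composition.blocksFun, List.getElem_ofFn]
      exact List.getElem_ofFn ..
    have h1 : (∏ j : Fin (auxComp n ⟨i, l⟩ hsum' hpos').length,
          PowerSeries.coeff ((auxComp n ⟨i, l⟩ hsum' hpos').blocksFun j) R)
        = ∏ j ∈ Finset.range i, PowerSeries.coeff (l j) R := by
      calc (∏ j : Fin (auxComp n ⟨i, l⟩ hsum' hpos').length,
            PowerSeries.coeff ((auxComp n ⟨i, l⟩ hsum' hpos').blocksFun j) R)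
          = ∏ j : Fin (auxComp n ⟨i, l⟩ hsum' hpos').length,
            PowerSeries.coeff (l j.val) R :=
            Finset.prod_congr rfl (fun j _ => by rw [hb j])
        _ = ∏ j ∈ Finset.range (auxComp n ⟨i, l⟩ hsum' hpos').length,
            PowerSeries.coeff (l j) R :=
            Fin.prod_univ_eq_prod_range (fun k => PowerSeries.coeff (l k) R) _
        _ = ∏ j ∈ Finset.range i, PowerSeries.coeff (l j) R := by rw [hlen]
    rw [h1, hlen]


/-- If `g` is analytic at `v = f x` and `f` is analytic at `x`, then
`h = fun x' => g^{(q)} (f x')` is analytic at `x`; its 0th Taylor coefficient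
is `g^{(q)}(v)`, and for `n ≥ 1` its `n`-th Taylor coefficient is the coefficient of
`X^n` in the formal substitution `Q(R(X))`, where `Q = Σ_{i≥1} (g^{(q+i)}(v)/i!) X^i`
and `R = Σ_{i≥1} (f^{(i)}(x)/i!) X^i`. -/
theorem taylor_coeff_nested_derivative (g f : ℝ → ℝ) (x : ℝ) (q : ℕ)
    (hg : AnalyticAt ℝ g (f x)) (hf : AnalyticAt ℝ f x)
    (R Q : PowerSeries ℝ)
    (hR : ∀ i, PowerSeries.coeff i R =
      if i = 0 then 0 else iteratedDeriv i f x / (i ! : ℝ))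
    (hQ : ∀ i, PowerSeries.coeff i Q =
      if i = 0 then 0 else iteratedDeriv (q + i) g (f x) / (i ! : ℝ)) :
    AnalyticAt ℝ (fun x' => iteratedDeriv q g (f x')) x ∧
    iteratedDeriv 0 (fun x' => iteratedDeriv q g (f x')) x = iteratedDeriv q g (f x) ∧
    ∀ n : ℕ, 1 ≤ n →
      iteratedDeriv n (fun x' => iteratedDeriv q g (f x')) x / (n ! : ℝ) =
        substCoeff Q R n := by
  have hG : AnalyticAt ℝ (iteratedDeriv q g) (f x) := aux_analyticAt_iteratedDeriv hg q
  refine ⟨hG.comp hf, by simp, ?_⟩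
  intro n hn
  obtain ⟨pG, hpG⟩ := hG
  obtain ⟨pf, hpf⟩ := hf
  have hcomp : HasFPowerSeriesAt (fun x' => iteratedDeriv q g (f x')) (pG.comp pf) x :=
    hpG.comp hpf
  rw [← aux_coeff_eq hcomp n, aux_coeff_comp,
    aux_substCoeff_eq Q R (by simp [hR 0]) n]
  refine Finset.sum_congr rfl fun c _ => ?_
  have hlen : c.length ≠ 0 := (c.length_pos_of_pos (by omega)).ne'
  congr 1
  · rw [aux_coeff_eq hpG c.length, hQ c.length, if_neg hlen,
      ← aux_iteratedDeriv_iteratedDeriv]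
  · refine Finset.prod_congr rfl fun j _ => ?_
    rw [aux_coeff_eq hpf, hR, if_neg (Nat.lt_of_lt_of_le Nat.zero_lt_one (c.one_le_blocksFun j)).ne']
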